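/- Let G be a directed graph with unique source s and unique sink t in which every vertex lies on an s-t path, and let n = |V|. The number of distinct maximal safe sequences for walk covers of G is at most n, since every maximal safe sequence equals ext(v) for some vertex v and the map v ↦ ext(v) on the relevant vertices yields at most n sequences. -/

import Mathlib

namespace FD

variable {V : Type*}

/-- A walk: nonempty vertex sequence with consecutive pairs edges. -/
def IsWalk (E : V → V → Prop) (l : List V) : Prop := l ≠ [] ∧ l.Chain' E

/-- A walk from `s` to `t`. -/
def IsWalkFromTo (E : V → V → Prop) (s t : V) (l : List V) : Prop :=
  IsWalk E l ∧ l.head? = some s ∧ l.getLast? = some t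

/-- A path from `s` to `t`: a walk with no repeated vertices. -/
def IsPathFromTo (E : V → V → Prop) (s t : V) (l : List V) : Prop :=
  IsWalkFromTo E s t l ∧ l.Nodup

/-- `s` is the unique source: a vertex has no incoming edge iff it is `s`. -/
def UniqueSource (E : V → V → Prop) (s : V) : Prop := ∀ v, (¬ ∃ u, E u v) ↔ v = s

/-- `t` is the unique sink: a vertex has no outgoing edge iff it is `t`. -/
def UniqueSink (E : V → V → Prop) (t : V) : Prop := ∀ v, (¬ ∃ w, E v w) ↔ v = t

/-- `u` s-dominates `v`: every `s`-`v` path contains `u`. -/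
def SDom (E : V → V → Prop) (s u v : V) : Prop := ∀ p, IsPathFromTo E s v p → u ∈ p

/-- `u` t-dominates `v`: every `v`-`t` path contains `u`. -/
def TDom (E : V → V → Prop) (t u v : V) : Prop := ∀ p, IsPathFromTo E v t p → u ∈ p

/-- `l` is the chain of s-dominators of `v`, listed in dominance order from `s` to `v`. -/
def IsSDomChain (E : V → V → Prop) (s v : V) (l : List V) : Prop :=
  l.Nodup ∧ (∀ u, u ∈ l ↔ SDom E s u v) ∧
    l.Chain' (fun a b => SDom E s a b) ∧ l.head? = some s ∧ l.getLast? = some v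

/-- `l` is the chain of t-dominators of `v`, listed in order from `v` to `t`. -/
def IsTDomChain (E : V → V → Prop) (t v : V) (l : List V) : Prop :=
  l.Nodup ∧ (∀ u, u ∈ l ↔ TDom E t u v) ∧
    l.Chain' (fun a b => TDom E t b a) ∧ l.head? = some v ∧ l.getLast? = some t

/-- `x = ext(v)`: the s-dominator chain of `v` (from `s` to `v`) concatenated with the
t-dominator chain of `v` (from `v` to `t`), with the duplicate `v` removed. -/
def IsExtension (E : V → V → Prop) (s t v : V) (x : List V) : Prop :=
  ∃ ds dt, IsSDomChain E s v ds ∧ IsTDomChain E t v dt ∧ x = ds ++ dt.tail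

/-- `P` is a `C`-walk cover: a set of `s`-`t` walks such that every vertex of `C`
lies on some walk of `P`. -/
def WalkCover (E : V → V → Prop) (s t : V) (C : Set V) (P : Set (List V)) : Prop :=
  (∀ w ∈ P, IsWalkFromTo E s t w) ∧ ∀ c ∈ C, ∃ w ∈ P, c ∈ w

/-- `X` is a `C`-safe sequence: every `C`-walk cover contains a walk having `X`
as a subsequence. -/
def SafeSeq (E : V → V → Prop) (s t : V) (C : Set V) (X : List V) : Prop :=
  ∀ P, WalkCover E s t C P → ∃ w ∈ P, X.Sublist w

/-- The list of edges traversed by a walk, in order (with multiplicity). -/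
def walkEdges (l : List V) : List (V × V) := l.zip l.tail

/-- `idoms` is the immediate s-dominator (parent in the s-dominator tree) function:
`idoms s = s`, and for `v ≠ s`, `idoms v` is a strict s-dominator of `v` that is
s-dominated by every strict s-dominator of `v`. -/
def IsIdomS (E : V → V → Prop) (s : V) (idoms : V → V) : Prop :=
  idoms s = s ∧ ∀ v, v ≠ s → idoms v ≠ v ∧ SDom E s (idoms v) v ∧
    ∀ u, u ≠ v → SDom E s u v → SDom E s u (idoms v)

/-- Immediate t-dominator (parent in the t-dominator tree) function. -/
def IsIdomT (E : V → V → Prop) (t : V) (idomt : V → V) : Prop :=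
  idomt t = t ∧ ∀ v, v ≠ t → idomt v ≠ v ∧ TDom E t (idomt v) v ∧
    ∀ u, u ≠ v → TDom E t u v → TDom E t u (idomt v)

/-- In the tree with parent function `par` rooted at `root`, `c` is the unique child
of `p`. -/
def UniqueChild (par : V → V) (root c p : V) : Prop :=
  c ≠ root ∧ par c = p ∧ ∀ y, y ≠ root → par y = p → y = c

/-- A univocal path `v₁ … v_k`: in the t-dominator tree each `v_{i+1}` has `v_i`
as its unique child, and `v_k … v_1` is a path in the s-dominator tree where each
vertex but the deepest (`v_k`) has exactly one child. -/
def IsUnivocal (idoms idomt : V → V) (s t : V) (l : List V) : Prop :=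
  l ≠ [] ∧ l.Chain' (fun a b => UniqueChild idomt t a b ∧ UniqueChild idoms s b a)

/-- A maximal univocal path: not properly contained in another univocal path. -/
def IsMaximalUnivocal (idoms idomt : V → V) (s t : V) (l : List V) : Prop :=
  IsUnivocal idoms idomt s t l ∧
    ∀ l', IsUnivocal idoms idomt s t l' → l <:+: l' → l' = l

/-- `X` is a maximal safe sequence for walk covers (covering all vertices):
it is safe and no proper supersequence of it is safe. -/
def MaximalSafe (E : V → V → Prop) (s t : V) (X : List V) : Prop :=
  SafeSeq E s t Set.univ X ∧ ∀ Y, X.Sublist Y → Y ≠ X → ¬ SafeSeq E s t Set.univ Y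

/-- Edge `e` reaches edge `e'`: there is a (possibly empty) path from the head of `e`
to the tail of `e'`. -/
def EReach (E : V → V → Prop) (e e' : V × V) : Prop := Relation.ReflTransGen E e.2 e'.1

/-- `P` is a cover of the edge set `C` by `s`-`t` walks. -/
def EdgeWalkCover (E : V → V → Prop) (s t : V) (C : Set (V × V)) (P : Set (List V)) : Prop :=
  (∀ w ∈ P, IsWalkFromTo E s t w) ∧ ∀ c ∈ C, ∃ w ∈ P, c ∈ walkEdges w

/-- A `C`-safe sequence of edges: every cover of `C` by `s`-`t` walks contains a walk
traversing the edges of `S` in order. -/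
def SafeEdgeSeq (E : V → V → Prop) (s t : V) (C : Set (V × V)) (S : List (V × V)) : Prop :=
  ∀ P, EdgeWalkCover E s t C P → ∃ w ∈ P, S.Sublist (walkEdges w)

end FD

/-!
The dominators of `v` lie on every `s`-`v` walk in dominance order (a dominator `d` occurring
before `e` on an `s`-`v` path dominates `e`), and likewise towards `t`; so `ext(v)` is a
subsequence of every walk through `v` and is safe. Conversely, let `X` be safe and cover each
`v` by an `s`-`v` path glued to a `v`-`t` path, chosen to contain as short a prefix, resp.
suffix, of `X` as possible. `X` is a subsequence of one of these walks, say through `v`; the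
part of `X` before `v` then lies on every `s`-`v` path and the part after `v` on every `v`-`t`
path, i.e. they consist of dominators of `v`, and `X` is a subsequence of `ext(v)`. Hence each
maximal safe sequence is `ext(v)` for some of the `|V|` vertices `v`.
-/

namespace List

variable {α : Type*}

theorem exists_eq_append_of_pair_sublist {a b : α} {l : List α} (h : [a, b] <+ l) :
    ∃ l₁ l₂ l₃, l = l₁ ++ a :: l₂ ++ b :: l₃ := by
  obtain ⟨r₁, r₂, rfl, ha, hb⟩ := cons_sublist_iff.mp h
  obtain ⟨l₁, l₂, rfl⟩ := append_of_mem ha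
  obtain ⟨m, l₃, rfl⟩ := append_of_mem (singleton_sublist.mp hb)
  exact ⟨l₁, l₂ ++ m, l₃, by simp⟩

theorem Sublist.sublist_filter {p : α → Bool} {l₁ l₂ : List α} (h : l₁ <+ l₂)
    (hp : ∀ x ∈ l₁, p x) : l₁ <+ l₂.filter p := by
  simpa [filter_eq_self.mpr hp] using h.filter p

theorem exists_mem_forall_prefix_sublist (X : List α) {S : Set (List α)} (hS : S.Nonempty) :
    ∃ p ∈ S, ∀ A, A <+: X → A <+ p → ∀ p' ∈ S, A <+ p' := by
  classical
  let L : List α → ℕ := fun p => Nat.findGreatest (fun i => X.take i <+ p) X.length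
  refine ⟨Function.argminOn L S hS, Function.argminOn_mem L S hS, fun A hAX hAp p' hp' => ?_⟩
  have hA : A = X.take A.length := prefix_iff_eq_take.mp hAX
  have hlen : A.length ≤ L p' :=
    (Nat.le_findGreatest hAX.length_le (hA ▸ hAp)).trans (Function.argminOn_le L S hp')
  calc A = X.take A.length := hA
    _ <+ X.take (L p') := (take_prefix_take_left hlen).sublist
    _ <+ p' := Nat.findGreatest_spec (P := fun i => X.take i <+ p') (Nat.zero_le _) (by simp)

theorem exists_mem_forall_suffix_sublist (X : List α) {S : Set (List α)} (hS : S.Nonempty) :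
    ∃ q ∈ S, ∀ B, B <:+ X → B <+ q → ∀ q' ∈ S, B <+ q' := by
  obtain ⟨p, hp, hmin⟩ := exists_mem_forall_prefix_sublist X.reverse (S := reverse ⁻¹' S)
    (by obtain ⟨q, hq⟩ := hS; exact ⟨q.reverse, by simpa using hq⟩)
  refine ⟨p.reverse, hp, fun B hBX hBq q' hq' => ?_⟩
  have h := hmin B.reverse (reverse_prefix.mpr hBX) (by simpa using hBq.reverse) q'.reverse
    (by simpa using hq')
  simpa using h.reverse

end List

namespace FD

variable {V : Type*} {E : V → V → Prop} {s t a : V}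

open Classical

section Walks

theorem IsWalkFromTo.reverse {l : List V} (h : IsWalkFromTo E s t l) :
    IsWalkFromTo (flip E) t s l.reverse := by
  obtain ⟨⟨hne, hch⟩, hh, hl⟩ := h
  exact ⟨⟨by simpa using hne, List.isChain_reverse.mpr hch⟩, by rwa [List.head?_reverse],
    by rwa [List.getLast?_reverse]⟩

theorem IsPathFromTo.reverse {l : List V} (h : IsPathFromTo E s t l) :
    IsPathFromTo (flip E) t s l.reverse :=
  ⟨h.1.reverse, List.nodup_reverse.mpr h.2⟩

theorem IsWalkFromTo.takeUntil {l₁ l₂ : List V} (h : IsWalkFromTo E s t (l₁ ++ a :: l₂)) :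
    IsWalkFromTo E s a (l₁ ++ [a]) := by
  obtain ⟨⟨-, hch⟩, hh, -⟩ := h
  rw [List.append_cons] at hch hh
  exact ⟨⟨by simp, (List.isChain_append.mp hch).1⟩,
    by rwa [List.head?_append_of_ne_nil _ (by simp)] at hh, List.getLast?_concat⟩

theorem IsWalkFromTo.dropUntil {l₁ l₂ : List V} (h : IsWalkFromTo E s t (l₁ ++ a :: l₂)) :
    IsWalkFromTo E a t (a :: l₂) := by
  obtain ⟨⟨-, hch⟩, -, hl⟩ := h
  exact ⟨⟨by simp, (List.isChain_append.mp hch).2.1⟩, rfl,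
    by rwa [List.getLast?_append_of_ne_nil _ (by simp)] at hl⟩

theorem IsWalkFromTo.append {p q : List V} (hp : IsWalkFromTo E s a p)
    (hq : IsWalkFromTo E a t q) : IsWalkFromTo E s t (p ++ q.tail) := by
  obtain ⟨⟨hpne, hpch⟩, hph, hpl⟩ := hp
  obtain ⟨⟨-, hqch⟩, hqh, hql⟩ := hq
  obtain ⟨q, rfl⟩ : ∃ q', q = a :: q' := ⟨_, List.eq_cons_of_mem_head? hqh⟩
  refine ⟨⟨by simp [hpne], List.isChain_append.mpr ⟨hpch, hqch.tail, ?_⟩⟩, ?_, ?_⟩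
  · intro x hx y hy
    obtain rfl : a = x := by simpa [hpl] using hx
    exact (List.isChain_cons.mp hqch).1 y hy
  · rwa [List.head?_append_of_ne_nil _ hpne]
  · rcases q with _ | ⟨b, q⟩ <;> simp_all

theorem IsPathFromTo.takeUntil {l₁ l₂ : List V} (h : IsPathFromTo E s t (l₁ ++ a :: l₂)) :
    IsPathFromTo E s a (l₁ ++ [a]) :=
  ⟨h.1.takeUntil,
    ((List.Sublist.refl l₁).append ((List.nil_sublist l₂).cons_cons a)).nodup h.2⟩

theorem IsPathFromTo.dropUntil {l₁ l₂ : List V} (h : IsPathFromTo E s t (l₁ ++ a :: l₂)) :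
    IsPathFromTo E a t (a :: l₂) :=
  ⟨h.1.dropUntil, (List.sublist_append_right l₁ _).nodup h.2⟩

theorem IsWalkFromTo.exists_path_subset {w : List V} (h : IsWalkFromTo E s t w) :
    ∃ p, IsPathFromTo E s t p ∧ p ⊆ w := by
  by_cases hw : w.Nodup
  · exact ⟨w, ⟨h, hw⟩, List.Subset.refl w⟩
  obtain ⟨x, hx⟩ : ∃ x, [x, x].Sublist w := by simpa [List.nodup_iff_sublist] using hw
  obtain ⟨l₁, m, l₂, rfl⟩ := List.exists_eq_append_of_pair_sublist hx
  have hshort : IsWalkFromTo E s t (l₁ ++ x :: l₂) := by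
    have h₁ : IsWalkFromTo E s t (l₁ ++ x :: (m ++ x :: l₂)) := by simpa using h
    have h₂ : IsWalkFromTo E s t ((l₁ ++ x :: m) ++ x :: l₂) := by simpa using h
    simpa using h₁.takeUntil.append h₂.dropUntil
  obtain ⟨p, hp, hpw⟩ := hshort.exists_path_subset
  refine ⟨p, hp, List.Subset.trans hpw fun y => ?_⟩
  simp only [List.mem_append, List.mem_cons]
  tauto
termination_by w.length
decreasing_by simp_all

end Walks

section Dominators

variable {u : V}

theorem sdom_refl : SDom E s a a := fun _ hp => List.mem_of_getLast? hp.1.2.2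

theorem tdom_refl : TDom E t a a := fun _ hq => List.mem_of_head? hq.1.2.1

theorem tdom_iff_sdom_flip : TDom E t u a ↔ SDom (flip E) t u a :=
  ⟨fun h p hp => by simpa using h p.reverse (by simpa using hp.reverse),
    fun h q hq => by simpa using h q.reverse hq.reverse⟩

theorem SDom.mem_of_isWalkFromTo {w : List V} (h : SDom E s u a) (hw : IsWalkFromTo E s a w) :
    u ∈ w :=
  let ⟨p, hp, hpw⟩ := hw.exists_path_subset
  hpw (h p hp)

theorem SDom.of_mem_prefix {d e : V} {l₁ l₂ : List V} (hda : SDom E s d a)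
    (hp : IsPathFromTo E s a (l₁ ++ e :: l₂)) (hd : d ∈ l₁) : SDom E s d e := by
  intro q hq
  -- `q` followed by the part of `p` after `e` is an `s`-`a` walk, and `d` is not in that part.
  have hdl₂ : d ∉ l₂ := fun h =>
    List.disjoint_of_nodup_append hp.2 hd (List.mem_cons_of_mem e h)
  simpa [hdl₂] using hda.mem_of_isWalkFromTo (hq.1.append hp.1.dropUntil)

theorem pairwise_filter_sdom {p : List V} (hp : IsPathFromTo E s a p) :
    (p.filter (SDom E s · a)).Pairwise (SDom E s) := by
  refine List.pairwise_filter.mpr (List.pairwise_iff_forall_sublist.mpr fun hde hd _ => ?_)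
  obtain ⟨l₁, l₂, l₃, rfl⟩ := List.exists_eq_append_of_pair_sublist hde
  exact (of_decide_eq_true hd).of_mem_prefix hp (by simp)

theorem sublist_of_pairwise_sdom {c : List V} :
    ∀ {v : V} {w : List V}, (c ++ [v]).Pairwise (SDom E s) → (c ++ [v]).Nodup →
      IsWalkFromTo E s v w → (c ++ [v]).Sublist w := by
  induction c using List.reverseRecOn with
  | nil => exact fun _ _ hw => List.singleton_sublist.mpr (List.mem_of_getLast? hw.2.2)
  | append_singleton c d ih =>
    intro v w hc hnd hw
    have hdv : SDom E s d v := List.pairwise_iff_forall_sublist.mp hc (by simp)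
    have hdv' : d ≠ v := by rintro rfl; simp [List.nodup_append] at hnd
    obtain ⟨w₁, w₂, rfl⟩ := List.append_of_mem (List.mem_of_getLast? hw.2.2)
    have hw₁ := hw.takeUntil
    obtain ⟨u₁, u₂, rfl⟩ := List.append_of_mem
      (by simpa [hdv'] using hdv.mem_of_isWalkFromTo hw₁ : d ∈ w₁)
    have hu := (show IsWalkFromTo E s v (u₁ ++ d :: (u₂ ++ [v])) by simpa using hw₁).takeUntil
    have hcd := ih (hc.sublist (List.sublist_append_left _ _))
      (hnd.sublist (List.sublist_append_left _ _)) hu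
    simpa using hcd.append (List.singleton_sublist.mpr (by simp : v ∈ u₂ ++ v :: w₂))

theorem filter_sdom_sublist {p w : List V} (hp : IsPathFromTo E s a p)
    (hw : IsWalkFromTo E s a w) : (p.filter (SDom E s · a)).Sublist w := by
  obtain ⟨p, rfl⟩ : ∃ p', p = p' ++ [a] :=
    ⟨p.dropLast, (List.dropLast_append_getLast? a hp.1.2.2).symm⟩
  have hfilter : (p ++ [a]).filter (SDom E s · a) = p.filter (SDom E s · a) ++ [a] := by
    simp [sdom_refl]
  rw [hfilter]
  exact sublist_of_pairwise_sdom (hfilter ▸ pairwise_filter_sdom hp)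
    (hfilter ▸ hp.2.filter _) hw

theorem filter_tdom_sublist {q w : List V} (hq : IsPathFromTo E a t q)
    (hw : IsWalkFromTo E a t w) : (q.filter (TDom E t · a)).Sublist w := by
  have h := (filter_sdom_sublist hq.reverse hw.reverse).reverse
  simpa [List.filter_reverse, tdom_iff_sdom_flip] using h

/-- `ext(a)`, read off an `s`-`a` path `p` and an `a`-`t` path `q`: every dominator of `a`
lies on them, in dominance order. -/
noncomputable def extAlong (E : V → V → Prop) (s t a : V) (p q : List V) : List V :=
  p.filter (SDom E s · a) ++ q.tail.filter (TDom E t · a)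

theorem filter_tdom_eq_cons {q : List V} (hq : IsPathFromTo E a t q) :
    q.filter (TDom E t · a) = a :: q.tail.filter (TDom E t · a) := by
  obtain ⟨q, rfl⟩ : ∃ q', q = a :: q' := ⟨_, List.eq_cons_of_mem_head? hq.1.2.1⟩
  simp [tdom_refl]

theorem safeSeq_extAlong {p q : List V} (hp : IsPathFromTo E s a p)
    (hq : IsPathFromTo E a t q) : SafeSeq E s t Set.univ (extAlong E s t a p q) := by
  rintro P ⟨hwalk, hcover⟩
  obtain ⟨w, hwP, haw⟩ := hcover a trivial
  obtain ⟨w₁, w₂, rfl⟩ := List.append_of_mem haw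
  have hS := filter_sdom_sublist hp (hwalk _ hwP).takeUntil
  have hT := filter_tdom_sublist hq (hwalk _ hwP).dropUntil
  rw [filter_tdom_eq_cons hq, List.cons_sublist_cons] at hT
  exact ⟨_, hwP, by simpa [extAlong] using hS.append hT⟩

end Dominators

theorem SafeSeq.exists_sublist_extAlong (hps : ∀ a, ∃ p, IsPathFromTo E s a p)
    (hqt : ∀ a, ∃ q, IsPathFromTo E a t q) {X : List V} (hX : SafeSeq E s t Set.univ X) :
    ∃ a, ∀ p q, IsPathFromTo E s a p → IsPathFromTo E a t q →
      X.Sublist (extAlong E s t a p q) := by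
  choose pa hpa hpamin using fun a => List.exists_mem_forall_prefix_sublist X (hps a)
  choose qa hqa hqamin using fun a => List.exists_mem_forall_suffix_sublist X (hqt a)
  obtain ⟨_, ⟨a, rfl⟩, hXw⟩ := hX (Set.range fun a => pa a ++ (qa a).tail)
    ⟨by rintro _ ⟨a, rfl⟩; exact (hpa a).1.append (hqa a).1,
     fun c _ =>
       ⟨_, ⟨c, rfl⟩, List.mem_append_left _ (List.mem_of_getLast? (hpa c).1.2.2)⟩⟩
  obtain ⟨A, B, rfl, hA, hB⟩ := List.sublist_append_iff.mp hXw
  have hAp := hpamin a A (List.prefix_append A B) hA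
  have hBq := hqamin a B (List.suffix_append A B) (hB.trans (List.tail_sublist _))
  have haB : a ∉ B := fun h => by
    have hnd := (qa a).eq_cons_of_mem_head? (hqa a).1.2.1 ▸ (hqa a).2
    exact (List.nodup_cons.mp hnd).1 (hB.subset h)
  refine ⟨a, fun p q hp hq => List.Sublist.append ?_ ?_⟩
  · exact (hAp p hp).sublist_filter fun x hx =>
      decide_eq_true fun p' hp' => (hAp p' hp').subset hx
  · have hBq' : B.Sublist (a :: q.tail) := List.eq_cons_of_mem_head? hq.1.2.1 ▸ hBq q hq
    have hBt : B.Sublist q.tail := (List.sublist_cons_iff.mp hBq').resolve_right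
      fun ⟨_, hB', _⟩ => haB (hB' ▸ List.mem_cons_self)
    exact hBt.sublist_filter fun x hx =>
      decide_eq_true fun q' hq' => (hBq q' hq').subset hx

theorem MaximalSafe.exists_eq_extAlong {ps qt : V → List V}
    (hps : ∀ a, IsPathFromTo E s a (ps a)) (hqt : ∀ a, IsPathFromTo E a t (qt a))
    {X : List V} (hX : MaximalSafe E s t X) : ∃ a, X = extAlong E s t a (ps a) (qt a) := by
  obtain ⟨a, ha⟩ :=
    hX.1.exists_sublist_extAlong (fun a => ⟨_, hps a⟩) (fun a => ⟨_, hqt a⟩)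
  refine ⟨a, by_contra fun hne => ?_⟩
  exact hX.2 _ (ha _ _ (hps a) (hqt a)) (Ne.symm hne) (safeSeq_extAlong (hps a) (hqt a))

theorem stmt18_general {V : Type*} [Fintype V] (E : V → V → Prop) (s t : V)
    (hall : ∀ a : V, ∃ p, IsPathFromTo E s t p ∧ a ∈ p) :
    {X : List V | MaximalSafe E s t X}.Finite ∧
      {X : List V | MaximalSafe E s t X}.ncard ≤ Fintype.card V := by
  have hsplit (a : V) : (∃ p, IsPathFromTo E s a p) ∧ ∃ q, IsPathFromTo E a t q := by
    obtain ⟨r, hr, har⟩ := hall a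
    obtain ⟨l₁, l₂, rfl⟩ := List.append_of_mem har
    exact ⟨⟨_, hr.takeUntil⟩, ⟨_, hr.dropUntil⟩⟩
  choose ps hps using fun a => (hsplit a).1
  choose qt hqt using fun a => (hsplit a).2
  have hsub : {X | MaximalSafe E s t X} ⊆ Set.range fun a => extAlong E s t a (ps a) (qt a) :=
    fun X hX => (hX.exists_eq_extAlong hps hqt).imp fun _ => Eq.symm
  refine ⟨(Set.finite_range _).subset hsub, ?_⟩
  calc {X | MaximalSafe E s t X}.ncard ≤ (Set.range _).ncard :=
        Set.ncard_le_ncard hsub (Set.finite_range _)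
    _ ≤ Nat.card V := Finite.card_range_le _
    _ = Fintype.card V := Nat.card_eq_fintype_card

/-- there are at most `n = |V|` distinct maximal safe sequences for walk
covers of `G`. -/
theorem stmt18 {V : Type*} [Fintype V] (E : V → V → Prop) (s t : V)
    (hs : UniqueSource E s) (ht : UniqueSink E t)
    (hall : ∀ a : V, ∃ p, IsPathFromTo E s t p ∧ a ∈ p) :
    {X : List V | MaximalSafe E s t X}.Finite ∧
      {X : List V | MaximalSafe E s t X}.ncard ≤ Fintype.card V :=
  stmt18_general E s t hall

end FD
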